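/- Let A be a Lie algebroid and (U, K, Δ) an LA-Dirac triple. Then for all u ∈ Γ(U) and k ∈ Γ(K): (ρ,ρᵗ)(Δ_u k) = ⟦u, (ρ,ρᵗ)k⟧_Δ + ∇^bas_{pr_A k} u. -/

import Mathlib

/-! Algebraic model of differential geometry: the "functions" form a commutative
ℝ-algebra `R`, vector fields are `ℝ`-derivations of `R`, and one-forms are the
`R`-dual of the module of vector fields. -/

variable (R : Type*) [CommRing R] [Algebra ℝ R]

/-- Vector fields on the "manifold" with function algebra `R`. -/
abbrev VF := Derivation ℝ R R

/-- One-forms: the `R`-dual of the module of vector fields. -/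
abbrev OneForm := VF R →ₗ[R] R

variable {R}

lemma vf_bracket_smul (X Y : VF R) (f : R) :
    ⁅X, f • Y⁆ = f • ⁅X, Y⁆ + (X f) • Y := by
  ext a
  simp only [Derivation.commutator_apply, Derivation.smul_apply, smul_eq_mul,
    Derivation.leibniz, Derivation.add_apply]
  ring

/-- The differential of a function, as a one-form. -/
noncomputable def dF (f : R) : OneForm R where
  toFun X := X f
  map_add' X Y := rfl
  map_smul' r X := rfl

/-- The Lie derivative of a one-form along a vector field. -/
noncomputable def lieD (X : VF R) (θ : OneForm R) : OneForm R where
  toFun Y := X (θ Y) - θ ⁅X, Y⁆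
  map_add' Y Z := by simp only [map_add, lie_add]; ring
  map_smul' f Y := by
    simp only [map_smul, smul_eq_mul, vf_bracket_smul, map_add, Derivation.leibniz,
      RingHom.id_apply]
    ring

/-- The interior product `ι_Y (dθ)` of the exterior differential of a one-form. -/
noncomputable def iotaD (Y : VF R) (θ : OneForm R) : OneForm R where
  toFun X := Y (θ X) - X (θ Y) - θ ⁅Y, X⁆
  map_add' X Z := by simp only [map_add, lie_add, Derivation.add_apply]; ring
  map_smul' f X := by
    simp only [map_smul, smul_eq_mul, vf_bracket_smul, map_add, Derivation.leibniz,
      Derivation.smul_apply, RingHom.id_apply]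
    ring

/-- The Courant–Dorfman bracket on sections of `TM ⊕ T*M`. -/
noncomputable def cbracket (e₁ e₂ : VF R × OneForm R) : VF R × OneForm R :=
  (⁅e₁.1, e₂.1⁆, lieD e₁.1 e₂.2 - iotaD e₂.1 e₁.2)

/-- The canonical symmetric pairing on sections of `TM ⊕ T*M`. -/
noncomputable def cpair (e₁ e₂ : VF R × OneForm R) : R := e₁.2 e₂.1 + e₂.2 e₁.1

/-- A Lie algebroid (in the algebraic section model): an `R`-module `A` with a Lie
bracket on sections and an anchor `ρ : A → TM` satisfying the Leibniz rule and
preserving brackets. -/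
structure LieAlgebroid (R : Type*) [CommRing R] [Algebra ℝ R]
    (A : Type*) [AddCommGroup A] [Module R A] where
  bracket : A → A → A
  bracket_add_left : ∀ a b c, bracket (a + b) c = bracket a c + bracket b c
  bracket_add_right : ∀ a b c, bracket a (b + c) = bracket a b + bracket a c
  skew : ∀ a b, bracket a b = - bracket b a
  jacobi : ∀ a b c,
    bracket a (bracket b c) = bracket (bracket a b) c + bracket b (bracket a c)
  anchor : A →ₗ[R] VF R
  leibniz : ∀ a (f : R) b, bracket a (f • b) = f • bracket a b + (anchor a f) • b
  anchor_bracket : ∀ a b, anchor (bracket a b) = ⁅anchor a, anchor b⁆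

variable {A : Type*} [AddCommGroup A] [Module R A]

/-- The pairing of the degenerate Courant algebroid `A ⊕ T*M`:
`⟨(a₁,θ₁),(a₂,θ₂)⟩_d = θ₂(ρ a₁) + θ₁(ρ a₂)`. -/
noncomputable def dpair (L : LieAlgebroid R A) (τ₁ τ₂ : A × OneForm R) : R :=
  τ₂.2 (L.anchor τ₁.1) + τ₁.2 (L.anchor τ₂.1)

/-- The bracket of the degenerate Courant algebroid `A ⊕ T*M`:
`[(a₁,θ₁),(a₂,θ₂)]_d = ([a₁,a₂], L_{ρ a₁} θ₂ − ι_{ρ a₂} dθ₁)`. -/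
noncomputable def dbracket (L : LieAlgebroid R A) (τ₁ τ₂ : A × OneForm R) :
    A × OneForm R :=
  (L.bracket τ₁.1 τ₂.1, lieD (L.anchor τ₁.1) τ₂.2 - iotaD (L.anchor τ₂.1) τ₁.2)

/-- The canonical pairing between `TM ⊕ A*` and `A ⊕ T*M`: `⟨(X,α),(a,θ)⟩ = α(a) + θ(X)`. -/
noncomputable def mixPair (ν : VF R × (A →ₗ[R] R)) (τ : A × OneForm R) : R :=
  ν.2 τ.1 + τ.2 ν.1

/-- A Dorfman connection `Δ : Γ(TM ⊕ A*) × Γ(A ⊕ T*M) → Γ(A ⊕ T*M)` relative to the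
anchor `pr_TM` and the canonical pairing. -/
structure DorfmanConn (R : Type*) [CommRing R] [Algebra ℝ R]
    (A : Type*) [AddCommGroup A] [Module R A] where
  conn : (VF R × (A →ₗ[R] R)) → (A × OneForm R) → (A × OneForm R)
  add_left : ∀ ν₁ ν₂ τ, conn (ν₁ + ν₂) τ = conn ν₁ τ + conn ν₂ τ
  add_right : ∀ ν τ₁ τ₂, conn ν (τ₁ + τ₂) = conn ν τ₁ + conn ν τ₂
  /-- `Δ_ν` is a derivation over `pr_TM(ν)`. -/
  leibniz : ∀ ν (f : R) τ, conn ν (f • τ) = f • conn ν τ + (ν.1 f) • τ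
  /-- `Δ_{fν} τ = f Δ_ν τ + ⟨ν,τ⟩ · (0, df)`. -/
  smul_left : ∀ (f : R) ν τ,
    conn (f • ν) τ = f • conn ν τ + (mixPair ν τ) • ((0 : A), dF f)
  /-- `Δ_ν (0, df) = (0, d(pr_TM(ν) f))`. -/
  conn_d : ∀ ν (f : R), conn ν ((0 : A), dF f) = ((0 : A), dF (ν.1 f))


/-- The map `(ρ, ρᵗ) : A ⊕ T*M → TM ⊕ A*`, `(a,θ) ↦ (ρ(a), θ ∘ ρ)`. -/
noncomputable def rr (L : LieAlgebroid R A) (τ : A × OneForm R) :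
    VF R × (A →ₗ[R] R) :=
  (L.anchor τ.1, τ.2 ∘ₗ L.anchor)


/-- `Ω_ν a = Δ_ν (a,0) − (0, d⟨ν,(a,0)⟩)`. -/
noncomputable def Omga (Dc : DorfmanConn R A) (ν : VF R × (A →ₗ[R] R)) (a : A) :
    A × OneForm R :=
  Dc.conn ν (a, 0) - ((0 : A), dF (ν.2 a))


/-- The Lie derivative `L_a` on `Γ(A ⊕ T*M)`: `L_a (a',θ) = ([a,a'], L_{ρ(a)} θ)`. -/
noncomputable def lieTau (L : LieAlgebroid R A) (a : A) (τ : A × OneForm R) :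
    A × OneForm R :=
  (L.bracket a τ.1, lieD (L.anchor a) τ.2)


/-- The Lie algebroid Lie derivative of a section of `A*` along a section of `A`. -/
noncomputable def lieADual (L : LieAlgebroid R A) (a : A) (α : A →ₗ[R] R) :
    A →ₗ[R] R where
  toFun b := L.anchor a (α b) - α (L.bracket a b)
  map_add' b c := by simp only [map_add, L.bracket_add_right]; ring
  map_smul' f b := by
    simp only [map_smul, smul_eq_mul, L.leibniz, map_add, Derivation.leibniz,
      RingHom.id_apply]
    ring


/-- The Lie derivative `L_a` on `Γ(TM ⊕ A*)`: `L_a (X,α) = ([ρ(a),X], L_a α)`. -/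
noncomputable def lieNu (L : LieAlgebroid R A) (a : A) (ν : VF R × (A →ₗ[R] R)) :
    VF R × (A →ₗ[R] R) :=
  (⁅L.anchor a, ν.1⁆, lieADual L a ν.2)


/-- The basic connection `∇^bas : Γ(A) × Γ(TM ⊕ A*) → Γ(TM ⊕ A*)`,
`∇^bas_a ν = (ρ,ρᵗ)(Ω_ν a) + L_a ν`. -/
noncomputable def nbasA (L : LieAlgebroid R A) (Dc : DorfmanConn R A) (a : A)
    (ν : VF R × (A →ₗ[R] R)) : VF R × (A →ₗ[R] R) :=
  rr L (Omga Dc ν a) + lieNu L a ν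


/-- The basic curvature `R^bas_Δ ∈ Ω²(A, Hom(TM ⊕ A*, A ⊕ T*M))`. -/
noncomputable def Rbas (L : LieAlgebroid R A) (Dc : DorfmanConn R A) (a₁ a₂ : A)
    (ν : VF R × (A →ₗ[R] R)) : A × OneForm R :=
  - Omga Dc ν (L.bracket a₁ a₂) + lieTau L a₁ (Omga Dc ν a₂)
    - lieTau L a₂ (Omga Dc ν a₁)
    + Omga Dc (nbasA L Dc a₂ ν) a₁ - Omga Dc (nbasA L Dc a₁ ν) a₂

/-! The identity is the case `ν = u ∈ Γ(U)`, `τ = k ∈ Γ(U°)` of a duality valid for all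
`ν ∈ Γ(TM ⊕ A*)` and `τ ∈ Γ(A ⊕ T*M)`: the `TM`-components of `(ρ,ρᵗ)(Δ_ν τ)` and
`⟦ν,(ρ,ρᵗ)τ⟧_Δ + ∇^bas_{pr_A τ} ν` agree, and at `a ∈ Γ(A)` their `A*`-components differ
by `⟨∇^bas_a ν, τ⟩`, which vanishes for `u` and `k` since `∇^bas_a u ∈ Γ(U)` and `k ∈ U°`.
Both facts come from unwinding the definitions, once duality with the anchored dull bracket
has forced `Δ_ν (0,θ)` to have second component `L_{pr_TM ν} θ` and a first component killed
by every section of `A*`. -/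

section

def DorfmanConn.IsDual (Dc : DorfmanConn R A)
    (db : (VF R × (A →ₗ[R] R)) → (VF R × (A →ₗ[R] R)) → (VF R × (A →ₗ[R] R))) : Prop :=
  ∀ ν₁ ν₂ τ, mixPair (db ν₁ ν₂) τ = ν₁.1 (mixPair ν₂ τ) - mixPair ν₂ (Dc.conn ν₁ τ)

variable {L : LieAlgebroid R A} {Dc : DorfmanConn R A}
  {db : (VF R × (A →ₗ[R] R)) → (VF R × (A →ₗ[R] R)) → (VF R × (A →ₗ[R] R))}

namespace DorfmanConn

lemma conn_eq_conn_fst_add_conn_snd (ν : VF R × (A →ₗ[R] R)) (τ : A × OneForm R) :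
    Dc.conn ν τ = Dc.conn ν (τ.1, 0) + Dc.conn ν (0, τ.2) := by
  rw [← Dc.add_right, Prod.mk_add_mk, add_zero, zero_add]

lemma snd_dual_apply (hdb : Dc.IsDual db) (ν₁ ν₂ : VF R × (A →ₗ[R] R)) (a : A) :
    (db ν₁ ν₂).2 a = ν₁.1 (ν₂.2 a) - mixPair ν₂ (Dc.conn ν₁ (a, 0)) := by
  simpa [mixPair] using hdb ν₁ ν₂ (a, 0)

lemma snd_conn_zero_fst (hdb : Dc.IsDual db)
    (hdb_anchor : ∀ ν₁ ν₂, (db ν₁ ν₂).1 = ⁅ν₁.1, ν₂.1⁆) (ν : VF R × (A →ₗ[R] R))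
    (θ : OneForm R) : (Dc.conn ν (0, θ)).2 = lieD ν.1 θ := by
  ext X
  have h := hdb ν (X, 0) (0, θ)
  simp only [mixPair, hdb_anchor, map_zero, LinearMap.zero_apply, zero_add] at h
  simp only [lieD, LinearMap.coe_mk, AddHom.coe_mk]
  linear_combination h

lemma apply_fst_conn_zero_fst (hdb : Dc.IsDual db)
    (hdb_anchor : ∀ ν₁ ν₂, (db ν₁ ν₂).1 = ⁅ν₁.1, ν₂.1⁆)
    (ν : VF R × (A →ₗ[R] R)) (θ : OneForm R) (α : A →ₗ[R] R) :
    α (Dc.conn ν (0, θ)).1 = 0 := by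
  have h := hdb ν (0, α) (0, θ)
  simp only [mixPair, hdb_anchor, lie_zero, map_zero, add_zero] at h
  linear_combination h

end DorfmanConn

lemma anchor_fst_conn_zero_fst (hdb : Dc.IsDual db)
    (hdb_anchor : ∀ ν₁ ν₂, (db ν₁ ν₂).1 = ⁅ν₁.1, ν₂.1⁆)
    (ν : VF R × (A →ₗ[R] R)) (θ : OneForm R) :
    L.anchor (Dc.conn ν (0, θ)).1 = 0 := by
  ext f
  exact Dc.apply_fst_conn_zero_fst hdb hdb_anchor ν θ (dF f ∘ₗ L.anchor)

lemma fst_rr_conn (hdb : Dc.IsDual db) (hdb_anchor : ∀ ν₁ ν₂, (db ν₁ ν₂).1 = ⁅ν₁.1, ν₂.1⁆)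
    (ν : VF R × (A →ₗ[R] R)) (τ : A × OneForm R) :
    (rr L (Dc.conn ν τ)).1 = (db ν (rr L τ) + nbasA L Dc τ.1 ν).1 := by
  rw [Dc.conn_eq_conn_fst_add_conn_snd]
  simp only [rr, nbasA, Omga, lieNu, Prod.fst_add, Prod.fst_sub, map_add, sub_zero,
    hdb_anchor, anchor_fst_conn_zero_fst hdb hdb_anchor]
  rw [← lie_skew]
  abel

lemma snd_rr_conn_apply (hdb : Dc.IsDual db)
    (hdb_anchor : ∀ ν₁ ν₂, (db ν₁ ν₂).1 = ⁅ν₁.1, ν₂.1⁆)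
    (ν : VF R × (A →ₗ[R] R)) (τ : A × OneForm R) (a : A) :
    (rr L (Dc.conn ν τ)).2 a
      = (db ν (rr L τ) + nbasA L Dc τ.1 ν).2 a + mixPair (nbasA L Dc a ν) τ := by
  rw [Dc.conn_eq_conn_fst_add_conn_snd]
  simp only [rr, nbasA, Omga, lieNu, lieADual, mixPair, Prod.snd_add, Prod.fst_add,
    Prod.snd_sub, Prod.fst_sub, LinearMap.add_apply, LinearMap.sub_apply,
    LinearMap.comp_apply, LinearMap.coe_mk, AddHom.coe_mk, map_add, sub_zero,
    Dc.snd_conn_zero_fst hdb hdb_anchor, Dc.snd_dual_apply hdb, L.skew a τ.1, map_neg]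
  simp only [lieD, dF, LinearMap.coe_mk, AddHom.coe_mk, ← lie_skew (L.anchor a) ν.1, map_neg]
  ring

end

theorem la_dirac_morphism_identity (R : Type*) [CommRing R] [Algebra ℝ R]
    {A : Type*} [AddCommGroup A] [Module R A]
    (L : LieAlgebroid R A) (Dc : DorfmanConn R A)
    (U : Submodule R (VF R × (A →ₗ[R] R)))
    (db : (VF R × (A →ₗ[R] R)) → (VF R × (A →ₗ[R] R)) → (VF R × (A →ₗ[R] R)))
    -- `db` is the dull bracket dual to `Δ`:
    (hdb : ∀ ν₁ ν₂ τ,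
      mixPair (db ν₁ ν₂) τ = ν₁.1 (mixPair ν₂ τ) - mixPair ν₂ (Dc.conn ν₁ τ))
    -- `db` is anchored by `pr_TM`:
    (hdb_anchor : ∀ ν₁ ν₂, (db ν₁ ν₂).1 = ⁅ν₁.1, ν₂.1⁆)
    -- `∇^bas_a` preserves `Γ(U)`:
    (hnbas : ∀ (a : A), ∀ u ∈ U, nbasA L Dc a u ∈ U) :
    ∀ u ∈ U, ∀ k : A × OneForm R, (∀ u' ∈ U, mixPair u' k = 0) →
      rr L (Dc.conn u k) = db u (rr L k) + nbasA L Dc k.1 u := by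
  intro u hu k hk
  refine Prod.ext (fst_rr_conn hdb hdb_anchor u k) (LinearMap.ext fun a => ?_)
  rw [snd_rr_conn_apply hdb hdb_anchor, hk _ (hnbas a u hu), add_zero]
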